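/- arXiv:1605.08063 — 3 statements merged into one kernel-verified Lean document; each statement's English description precedes it below -/
import Mathlib

section
/- For any integral lattice L (symmetric bilinear form with values in Z on a finitely generated free Z-module) and any prime p, the Watson transform E_p(L) = L + (p^{-1} L ∩ p L^*) inside L ⊗ Q is again an integral lattice, i.e., the bilinear form takes integer values on E_p(L). -/
/-- For an integral lattice `L` (a finitely generated free `ℤ`-submodule of
`V = L ⊗ ℚ` on which a symmetric bilinear form `B` takes integer values) and a
prime `p`, the Watson transform `E_p(L) = L + (p⁻¹L ∩ pL*)` is again integral:
`B` takes integer values on `E_p(L)`. -/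
theorem watson_transform_integral
    (n : ℕ) (B : (Fin n → ℚ) →ₗ[ℚ] (Fin n → ℚ) →ₗ[ℚ] ℚ)
    (hsym : ∀ x y, B x y = B y x)
    (L : Submodule ℤ (Fin n → ℚ)) (hfg : L.FG) (hfree : Module.Free ℤ L)
    (hint : ∀ x ∈ L, ∀ y ∈ L, ∃ m : ℤ, B x y = (m : ℚ))
    (p : ℕ) (hp : p.Prime)
    -- the dual lattice L* as a set
    (dual : Set (Fin n → ℚ))
    (hdual : dual = {w | ∀ y ∈ L, ∃ m : ℤ, B w y = (m : ℚ)})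
    -- the Watson transform E_p(L) = L + (p⁻¹L ∩ pL*) as a set
    (EpL : Set (Fin n → ℚ))
    (hEpL : EpL = {x | ∃ a ∈ L, ∃ b : Fin n → ℚ,
        (p : ℚ) • b ∈ L ∧ (∃ w ∈ dual, b = (p : ℚ) • w) ∧ x = a + b}) :
    ∀ x ∈ EpL, ∀ y ∈ EpL, ∃ m : ℤ, B x y = (m : ℚ) := by
  subst hdual hEpL
  rintro x ⟨a, ha, b, hpb, ⟨w, hw, rfl⟩, rfl⟩ y ⟨a', ha', b', hpb', ⟨w', hw', rfl⟩, rfl⟩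
  obtain ⟨m1, hm1⟩ := hint a ha a' ha'
  obtain ⟨m2, hm2⟩ := hw' a ha
  obtain ⟨m3, hm3⟩ := hw a' ha'
  obtain ⟨m4, hm4⟩ := hw' ((p : ℚ) • ((p : ℚ) • w)) hpb
  refine ⟨m1 + p * m2 + p * m3 + m4, ?_⟩
  have h1 : B a ((p : ℚ) • w') = (p : ℚ) * (m2 : ℚ) := by
    rw [map_smul, smul_eq_mul, hsym a w', hm2]
  have h2 : B ((p : ℚ) • w) a' = (p : ℚ) * (m3 : ℚ) := by
    simp only [map_smul, LinearMap.smul_apply, smul_eq_mul, hm3]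
  have h3 : B ((p : ℚ) • w) ((p : ℚ) • w') = (m4 : ℚ) := by
    have e : B w' ((p : ℚ) • ((p : ℚ) • w)) = (p : ℚ) * ((p : ℚ) * B w' w) := by
      simp [map_smul]
    rw [e] at hm4
    simp only [map_smul, LinearMap.smul_apply, smul_eq_mul, hsym w w']
    linarith [hm4]
  simp only [map_add, LinearMap.add_apply, h1, h2, h3, hm1]
  push_cast
  ring
end

section
/- Let L be a quadratic lattice over Z_p (p odd) with Jordan decomposition L = L_0 ⊕ [p]L_1 ⊕ [p^2]L_2 ⊕ …, where L_j is unimodular scaled by p^j. Then the Jordan decomposition of E_p(L) at p is L_0 ⊕ [p]L_1 ⊕ (L_2 ⊕ [p]L_3 ⊕ …); in particular the p-adic valuation of det E_p(L) equals (valuation of det L) minus 2·(rank of the part of L with scale ≥ p^2) ... i.e., each invariant factor p^k with k ≥ 2 is replaced by p^{k-2}. -/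
open Finset

/-- Let `p` be an odd prime and `L = ℤ_[p]ⁿ ⊆ ℚ_[p]ⁿ` a lattice whose (diagonal)
Jordan decomposition has Gram matrix `diag (p^(j i) * u i)` with `u i` units, i.e.
`L = L₀ ⊕ [p]L₁ ⊕ [p²]L₂ ⊕ ⋯`.  Then the Watson transform
`E_p(L) = L + (p⁻¹L ∩ pL*)` is the lattice obtained by dividing by `p` exactly the
basis vectors of scale `p^j` with `j ≥ 2`; so its Jordan decomposition is
`L₀ ⊕ [p]L₁ ⊕ (L₂ ⊕ [p]L₃ ⊕ ⋯)`: each invariant factor `p^k` with `k ≥ 2` is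
replaced by `p^(k-2)`, and the `p`-adic valuation of `det E_p(L)` equals that of
`det L` minus twice the rank of the part of `L` of scale `≥ p²`. -/
theorem watson_transform_jordan_decomposition
    (p : ℕ) [Fact p.Prime] (hp : p ≠ 2)
    (n : ℕ) (j : Fin n → ℕ) (u : Fin n → ℤ_[p]ˣ)
    (B : (Fin n → ℚ_[p]) → (Fin n → ℚ_[p]) → ℚ_[p])
    (hB : B = fun v w => ∑ i, (p : ℚ_[p]) ^ (j i) * ((u i : ℤ_[p]) : ℚ_[p]) * v i * w i)
    (L : Set (Fin n → ℚ_[p])) (hL : L = {v | ∀ i, ‖v i‖ ≤ 1})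
    (dual : Set (Fin n → ℚ_[p])) (hdual : dual = {w | ∀ v ∈ L, ‖B w v‖ ≤ 1})
    (EpL : Set (Fin n → ℚ_[p]))
    (hEpL : EpL = {x | ∃ a ∈ L, ∃ b : Fin n → ℚ_[p],
        (p : ℚ_[p]) • b ∈ L ∧ (∃ w ∈ dual, b = (p : ℚ_[p]) • w) ∧ x = a + b}) :
    EpL = {v | ∀ i, ‖v i‖ ≤ if 2 ≤ j i then (p : ℝ) else 1} ∧
      (∑ i, (if 2 ≤ j i then j i - 2 else j i))
        = (∑ i, j i) - 2 * (univ.filter fun i => 2 ≤ j i).card := by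
  have hppos : (0:ℝ) < p := by exact_mod_cast (Fact.out : p.Prime).pos
  have hp1 : (1:ℝ) < p := by exact_mod_cast (Fact.out : p.Prime).one_lt
  have hpne : ((p:ℚ_[p])) ≠ 0 := Nat.cast_ne_zero.mpr (Fact.out : p.Prime).ne_zero
  have hnormu : ∀ i, ‖((u i : ℤ_[p]) : ℚ_[p])‖ = 1 := fun i => by
    rw [← PadicInt.norm_def]; exact PadicInt.norm_units (u i)
  have hnormp : ‖(p:ℚ_[p])‖ = (p:ℝ)⁻¹ := Padic.norm_p
  constructor
  · ext v
    simp only [hEpL, hL, hdual, Set.mem_setOf_eq]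
    constructor
    · rintro ⟨a, ha, b, hpb, ⟨w, hw, rfl⟩, rfl⟩
      intro i
      -- bound on ‖w i‖
      have hwi : (p:ℝ)^(-(j i : ℤ)) * ‖w i‖ ≤ 1 := by
        have hsingle : (∀ k, ‖(Pi.single i (1:ℚ_[p]) : Fin n → ℚ_[p]) k‖ ≤ 1) := by
          intro k
          rcases eq_or_ne k i with rfl | h
          · simp
          · simp [Pi.single_eq_of_ne h]
        have := hw (Pi.single i 1) hsingle
        rw [hB] at this
        simp only at this
        rw [Finset.sum_eq_single i (fun k _ hk => by
              simp [Pi.single_eq_of_ne hk]) (fun h => absurd (mem_univ i) h)] at this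
        rw [Pi.single_eq_same, mul_one] at this
        calc (p:ℝ)^(-(j i : ℤ)) * ‖w i‖
            = ‖(p:ℚ_[p])^(j i) * ((u i : ℤ_[p]) : ℚ_[p]) * w i‖ := by
              rw [norm_mul, norm_mul, hnormu, Padic.norm_p_pow, mul_one]
          _ ≤ 1 := this
      have hbw : ‖((p:ℚ_[p]) • w) i‖ = (p:ℝ)⁻¹ * ‖w i‖ := by
        simp [norm_mul, hnormp]
      have hbound : ‖((p:ℚ_[p]) • w) i‖ ≤ if 2 ≤ j i then (p:ℝ) else 1 := by
        split
        · -- use p • (p • w) ∈ L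
          have h1 := hpb i
          have h2 : ‖((p:ℚ_[p]) • (p:ℚ_[p]) • w) i‖
              = (p:ℝ)⁻¹ * ‖((p:ℚ_[p]) • w) i‖ := by
            simp [norm_mul, hnormp, mul_assoc]
          rw [h2] at h1
          calc ‖((p:ℚ_[p]) • w) i‖ = (p:ℝ) * ((p:ℝ)⁻¹ * ‖((p:ℚ_[p]) • w) i‖) := by
                rw [← mul_assoc, mul_inv_cancel₀ (ne_of_gt hppos), one_mul]
            _ ≤ (p:ℝ) * 1 := by
                exact mul_le_mul_of_nonneg_left h1 (le_of_lt hppos)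
            _ = (p:ℝ) := mul_one _
        · -- j i ≤ 1
          rename_i hji
          have hji1 : j i ≤ 1 := by omega
          have hwle : ‖w i‖ ≤ (p:ℝ)^(j i : ℤ) := by
            have h' := hwi
            rw [zpow_neg] at h'
            have h'' := (inv_mul_le_iff₀ (by positivity : (0:ℝ) < (p:ℝ)^(j i:ℤ))).mp h'
            simpa using h''
          rw [hbw]
          calc (p:ℝ)⁻¹ * ‖w i‖ ≤ (p:ℝ)⁻¹ * (p:ℝ)^(j i : ℤ) := by
                exact mul_le_mul_of_nonneg_left hwle (by positivity)
            _ = (p:ℝ)^((j i : ℤ) - 1) := by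
                rw [zpow_sub₀ (ne_of_gt hppos), zpow_one]; ring
            _ ≤ (p:ℝ)^(0:ℤ) := by
                apply zpow_le_zpow_right₀ (le_of_lt hp1); omega
            _ = 1 := zpow_zero _
      have hai : ‖a i‖ ≤ if 2 ≤ j i then (p:ℝ) else 1 := by
        refine (ha i).trans ?_
        split
        · exact le_of_lt hp1
        · exact le_rfl
      calc ‖(a + (p:ℚ_[p]) • w) i‖ = ‖a i + ((p:ℚ_[p]) • w) i‖ := rfl
        _ ≤ max ‖a i‖ ‖((p:ℚ_[p]) • w) i‖ := IsUltrametricDist.norm_add_le_max _ _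
        _ ≤ _ := max_le hai hbound
    · intro hv
      refine ⟨fun i => if 2 ≤ j i then 0 else v i, ?_,
        fun i => if 2 ≤ j i then v i else 0, ?_, ⟨(p:ℚ_[p])⁻¹ • fun i => if 2 ≤ j i then v i else 0,
          ?_, ?_⟩, ?_⟩
      · intro i
        by_cases h : 2 ≤ j i
        · simp [h]
        · have := hv i
          rw [if_neg h] at this
          simpa [h] using this
      · intro i
        by_cases h : 2 ≤ j i
        · have := hv i
          rw [if_pos h] at this
          have : ‖(p:ℚ_[p]) * v i‖ ≤ 1 := by
            rw [norm_mul, hnormp]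
            calc (p:ℝ)⁻¹ * ‖v i‖ ≤ (p:ℝ)⁻¹ * (p:ℝ) :=
                mul_le_mul_of_nonneg_left this (by positivity)
              _ = 1 := inv_mul_cancel₀ (ne_of_gt hppos)
          simpa [h] using this
        · simp [h]
      · -- membership in dual
        intro v' hv'
        rw [hB]
        simp only
        apply IsUltrametricDist.norm_sum_le_of_forall_le_of_nonneg zero_le_one
        intro i _
        simp only [Pi.smul_apply, smul_eq_mul]
        by_cases h : 2 ≤ j i
        · rw [if_pos h]
          have hvi := hv i; rw [if_pos h] at hvi
          have : ‖(p:ℚ_[p]) ^ j i * ((u i : ℤ_[p]) : ℚ_[p]) * ((p:ℚ_[p])⁻¹ * v i) * v' i‖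
              = (p:ℝ)^(-(j i:ℤ)) * ((p:ℝ) * ‖v i‖) * ‖v' i‖ := by
            rw [norm_mul, norm_mul, norm_mul, norm_mul, hnormu, norm_inv, hnormp,
              Padic.norm_p_pow, inv_inv, mul_one]
          rw [this]
          calc (p:ℝ)^(-(j i:ℤ)) * ((p:ℝ) * ‖v i‖) * ‖v' i‖
              ≤ (p:ℝ)^(-(j i:ℤ)) * ((p:ℝ) * (p:ℝ)) * 1 := by
                apply mul_le_mul
                · apply mul_le_mul_of_nonneg_left _ (by positivity)
                  exact mul_le_mul_of_nonneg_left hvi (le_of_lt hppos)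
                · exact hv' i
                · exact norm_nonneg _
                · positivity
            _ = (p:ℝ)^((2:ℤ) - (j i:ℤ)) := by
                rw [zpow_sub₀ (ne_of_gt hppos), zpow_neg, zpow_two]; ring
            _ ≤ (p:ℝ)^(0:ℤ) := by
                apply zpow_le_zpow_right₀ (le_of_lt hp1); omega
            _ = 1 := zpow_zero _
        · rw [if_neg h]
          simp
      · rw [smul_smul, mul_inv_cancel₀ hpne, one_smul]
      · funext i
        simp only [Pi.add_apply]
        by_cases h : 2 ≤ j i <;> simp [h]
  · have key : ∀ i : Fin n, (if 2 ≤ j i then j i - 2 else j i)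
        = j i - (if 2 ≤ j i then 2 else 0) := by
      intro i; split <;> omega
    simp_rw [key]
    rw [Finset.sum_tsub_distrib _ (fun i _ => by split <;> omega)]
    congr 1
    rw [Finset.sum_ite, Finset.sum_const, Finset.sum_const_zero]
    simp [mul_comm]
end

section
/- If L is an integral lattice of rank at least 3 with square-free determinant, then over Z_p for every prime p, the Jordan decomposition of L has at most one p-modular component of rank 1, and no component of scale p^2 or higher; consequently no diagonalization of L over Z_p has all diagonal entries equal to distinct powers of p. Combined with Kneser's theorem, the genus of an indefinite such L contains exactly one class. -/
open Matrix Finset Classical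

/-- If `L` is an integral lattice of rank `n ≥ 3` with square-free determinant then,
for every prime `p` and every diagonalization `D = gᵀ S g` of its Gram matrix over
`ℤ_[p]`, the Jordan decomposition has at most one `p`-modular component (of rank 1):
at most one diagonal entry is divisible by `p`, and no entry is divisible by `p²`;
consequently the diagonal entries cannot all be units times pairwise distinct powers
of `p` (so by Kneser's theorem the genus of an indefinite such `L` has one class). -/
theorem squarefree_det_no_distinct_power_diagonalization
    (n : ℕ) (hn : 3 ≤ n)
    (S : Matrix (Fin n) (Fin n) ℤ) (hsym : Sᵀ = S) (hsf : Squarefree S.det)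
    (p : ℕ) [Fact p.Prime]
    (g : GL (Fin n) ℤ_[p]) (d : Fin n → ℤ_[p])
    (hdiag : (↑g : Matrix (Fin n) (Fin n) ℤ_[p])ᵀ * S.map (Int.cast : ℤ → ℤ_[p])
        * (↑g : Matrix (Fin n) (Fin n) ℤ_[p]) = Matrix.diagonal d) :
    (univ.filter fun i => (p : ℤ_[p]) ∣ d i).card ≤ 1 ∧
      (∀ i, ¬ ((p : ℤ_[p]) ^ 2 ∣ d i)) ∧
      ¬ ∃ k : Fin n → ℕ, Function.Injective k ∧
          ∀ i, ∃ u : ℤ_[p]ˣ, d i = (u : ℤ_[p]) * (p : ℤ_[p]) ^ (k i) := by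
  have hp : (p : ℕ).Prime := Fact.out
  -- determinant computation
  have hdet : ∏ i, d i = ((↑g : Matrix (Fin n) (Fin n) ℤ_[p]).det) ^ 2 *
      ((S.det : ℤ) : ℤ_[p]) := by
    have := congrArg Matrix.det hdiag
    rw [Matrix.det_mul, Matrix.det_mul, Matrix.det_transpose, Matrix.det_diagonal] at this
    have hmap : (S.map (Int.cast : ℤ → ℤ_[p])).det = ((S.det : ℤ) : ℤ_[p]) :=
      (RingHom.map_det (Int.castRingHom ℤ_[p]) S).symm
    rw [hmap] at this
    rw [← this]; ring
  have hu : IsUnit ((↑g : Matrix (Fin n) (Fin n) ℤ_[p]).det) := by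
    exact Matrix.isUnit_iff_isUnit_det _ |>.mp g.isUnit
  -- p² does not divide the product
  have hnd : ¬ ((p : ℤ_[p]) ^ 2 ∣ ∏ i, d i) := by
    intro h
    rw [hdet] at h
    have h2 : (p : ℤ_[p]) ^ 2 ∣ ((S.det : ℤ) : ℤ_[p]) :=
      (hu.pow 2).dvd_mul_left.mp h
    rw [PadicInt.pow_p_dvd_int_iff] at h2
    have : (p : ℤ) * (p : ℤ) ∣ S.det := by
      have := h2; rwa [sq] at this
    have hpu : IsUnit ((p : ℤ)) := hsf _ this
    have h2le : (2 : ℤ) ≤ (p : ℤ) := by exact_mod_cast hp.two_le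
    rcases Int.isUnit_iff.mp hpu with h | h <;> omega
  have hpp : Prime (p : ℤ_[p]) := PadicInt.prime_p
  -- no entry divisible by p²
  have h2 : ∀ i, ¬ ((p : ℤ_[p]) ^ 2 ∣ d i) := by
    intro i hi
    exact hnd (hi.trans (Finset.dvd_prod_of_mem d (mem_univ i)))
  -- at most one entry divisible by p
  have h1 : (univ.filter fun i => (p : ℤ_[p]) ∣ d i).card ≤ 1 := by
    by_contra hc
    push_neg at hc
    obtain ⟨i, hi, j, hj, hij⟩ := Finset.one_lt_card.mp hc
    simp only [mem_filter] at hi hj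
    apply hnd
    have hjmem : j ∈ univ.erase i := Finset.mem_erase.mpr ⟨Ne.symm hij, mem_univ j⟩
    calc (p : ℤ_[p]) ^ 2 = p * p := sq _
    _ ∣ d i * ∏ x ∈ univ.erase i, d x :=
        mul_dvd_mul hi.2 (hj.2.trans (Finset.dvd_prod_of_mem d hjmem))
    _ = ∏ x, d x := Finset.mul_prod_erase univ d (mem_univ i)
  refine ⟨h1, h2, ?_⟩
  rintro ⟨k, hkinj, hk⟩
  -- at least two indices with k i ≥ 1, hence p ∣ d i for two indices
  have hsub : ∀ i, 1 ≤ k i → i ∈ univ.filter fun i => (p : ℤ_[p]) ∣ d i := by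
    intro i hki
    obtain ⟨u, hu'⟩ := hk i
    refine Finset.mem_filter.mpr ⟨mem_univ i, ?_⟩
    rw [hu']
    exact Dvd.dvd.mul_left (dvd_pow_self _ (by omega)) _
  -- at most one i with k i = 0
  have : ((univ : Finset (Fin n)).filter fun i => k i = 0).card ≤ 1 := by
    refine Finset.card_le_one.mpr ?_
    intro a ha b hb
    simp only [mem_filter] at ha hb
    exact hkinj (ha.2.trans hb.2.symm)
  have hcard : 2 ≤ ((univ : Finset (Fin n)).filter fun i => 1 ≤ k i).card := by
    have hsplit : ((univ : Finset (Fin n)).filter fun i => k i = 0).card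
        + ((univ : Finset (Fin n)).filter fun i => 1 ≤ k i).card = n := by
      have h := Finset.card_filter_add_card_filter_not
        (s := (univ : Finset (Fin n))) (p := fun i => k i = 0)
      have heq : ((univ : Finset (Fin n)).filter fun i => ¬ k i = 0)
          = (univ : Finset (Fin n)).filter fun i => 1 ≤ k i := by
        apply Finset.filter_congr
        intro i _
        simp [Nat.one_le_iff_ne_zero]
      rw [heq, Finset.card_fin] at h
      exact h
    omega
  have : ((univ : Finset (Fin n)).filter fun i => 1 ≤ k i).card ≤
      (univ.filter fun i => (p : ℤ_[p]) ∣ d i).card := by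
    apply Finset.card_le_card
    intro i hi
    exact hsub i (Finset.mem_filter.mp hi).2
  omega
end
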